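/- Let X be an uncountable set and S ⊆ [X]^ω stationary. If P is an S-complete poset, then forcing with P preserves stationarity of every stationary subset of S, preserves ω₁, and adds no new countable sequences of ordinals. -/
import Mathlib

section SCAux
variable {X : Type*} {P : Type*} [Preorder P]

/-- duplicate each entry of a list -/
def scDup : List X → List X
  | [] => []
  | a :: t => a :: a :: scDup t

lemma mem_scDup {x : X} : ∀ {l : List X}, x ∈ scDup l → x ∈ l
  | [], h => by simp [scDup] at h
  | a :: t, h => by
    simp only [scDup, List.mem_cons] at h ⊢
    rcases h with h | h | h
    · exact Or.inl h
    · exact Or.inl h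
    · exact Or.inr (mem_scDup h)

open Classical in
/-- partial inverse of `scDup` -/
noncomputable def scUndup : List X → Option (List X)
  | [] => some []
  | [_] => none
  | a :: b :: t => if a = b then (scUndup t).map (a :: ·) else none

lemma scUndup_scDup (l : List X) : scUndup (scDup l) = some l := by
  induction l with
  | nil => rfl
  | cons a t ih => simp [scDup, scUndup, ih]

lemma scUndup_even : ∀ (m l : List X), scUndup m = some l → Even m.length
  | [], _, _ => ⟨0, rfl⟩
  | [a], l, h => by simp [scUndup] at h
  | a :: b :: t, l, h => by
    rw [scUndup] at h
    split_ifs at h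
    obtain ⟨l', hl', rfl⟩ := Option.map_eq_some_iff.mp h
    have := scUndup_even t l' hl'
    simpa [Nat.even_add_one, List.length_cons] using this.add ⟨1, rfl⟩

lemma scUndup_odd {m : List X} (h : Odd m.length) : scUndup m = none := by
  cases hu : scUndup m with
  | none => rfl
  | some l => exact absurd (scUndup_even m l hu) (Nat.not_even_iff_odd.mpr h)

/-- condition after a (reversed, encoded) history -/
def histCond (ext : List X → P → P) (es : X → List X) (p : P) : List X → P
  | [] => p
  | y :: t => ext (es y) (histCond ext es p t)

/-- value decided at the last step of a (reversed, encoded) history -/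
def histVal (ext : List X → P → P) (xval : List X → P → X) (es : X → List X) (p : P) :
    List X → X
  | [] => xval [] p
  | y :: t => xval (es y) (histCond ext es p t)

lemma countable_lists {Z : Set X} (h : Z.Countable) :
    {l : List X | ∀ x ∈ l, x ∈ Z}.Countable := by
  haveI := h.to_subtype
  refine (Set.countable_range (List.map ((↑) : Z → X))).mono ?_
  intro l hl
  refine ⟨l.pmap (fun x hx => ⟨x, hx⟩) hl, ?_⟩
  induction l with
  | nil => rfl
  | cons a t ih => simp_all [List.pmap, ih]

end SCAux


open Set

/-- The first uncountable ordinal ω₁. -/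
noncomputable def omega1 : Ordinal.{0} := (Cardinal.aleph 1).ord

/-- `D` is a dense subset of the poset `P`. -/
def IsDenseSub (P : Type*) [Preorder P] (D : Set P) : Prop :=
  ∀ p : P, ∃ q, q ≤ p ∧ q ∈ D

/-- `S` is stationary in `[X]^ω`: every club (given by closure under a finitary
function) contains a countable member of `S`. -/
def Stationary {X : Type*} (S : Set (Set X)) : Prop :=
  ∀ F : List X → X, ∃ Z : Set X, Z.Countable ∧ Z ∈ S ∧
    ∀ l : List X, (∀ a ∈ l, a ∈ Z) → F l ∈ Z

/-- `P` is `S`-complete: for every suitable countable model `M` with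
`M ∩ X ∈ S` (represented by its trace `MX = M ∩ X` on `X` and the countable
family `MD` of dense subsets of `P` belonging to `M`), every descending
`(M,P)`-generic sequence has a lower bound. -/
def SComplete (X P : Type*) [Preorder P] (S : Set (Set X)) : Prop :=
  ∀ MX : Set X, MX ∈ S → ∀ MD : Set (Set P), MD.Countable →
    ∀ p : ℕ → P, (∀ n, p (n + 1) ≤ p n) →
      (∀ D ∈ MD, IsDenseSub P D → ∃ n, p n ∈ D) →
      ∃ q, ∀ n, q ≤ p n

/-- Lemma 2.9 and the remark after it: if `X` is uncountable, `S ⊆ [X]^ω` is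
stationary and `P` is `S`-complete, then forcing with `P`
(1) preserves stationarity of every stationary `S' ⊆ S`: for every `P`-name
`N` for a finitary function on `X` (so `N l x` is the set of conditions forcing
the value at `l` to be `x`), densely many conditions force some `Z ∈ S'` to be
closed under it;
(2) adds no new countable sequences of ordinals: every name
`F` for a function `ω → Ord` is densely decided to equal a ground model `g`;
(3) preserves ω₁: if moreover all values of `F` are forced to be countable
ordinals, the deciding condition yields a ground-model function into ω₁. -/
theorem sComplete_preserves
    (X : Type*) [Uncountable X] (P : Type*) [Preorder P]
    (S : Set (Set X)) (hScnt : ∀ Z ∈ S, Set.Countable Z)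
    (hSstat : Stationary S) (hPS : SComplete X P S) :
    (∀ S' ⊆ S, Stationary S' →
      ∀ N : List X → X → Set P,
        (∀ l x p q, p ∈ N l x → q ≤ p → q ∈ N l x) →
        (∀ l x x' p, p ∈ N l x → p ∈ N l x' → x = x') →
        (∀ l p, ∃ q, q ≤ p ∧ ∃ x, q ∈ N l x) →
        ∀ p : P, ∃ q, q ≤ p ∧ ∃ Z ∈ S', Z.Countable ∧
          ∀ l : List X, (∀ a ∈ l, a ∈ Z) →
            ∀ r x, r ≤ q → r ∈ N l x → x ∈ Z) ∧
    (∀ F : ℕ → Ordinal.{0} → Set P,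
      (∀ n o p q, p ∈ F n o → q ≤ p → q ∈ F n o) →
      (∀ n o o' p, p ∈ F n o → p ∈ F n o' → o = o') →
      (∀ n p, ∃ q, q ≤ p ∧ ∃ o, q ∈ F n o) →
      (∀ p : P, ∃ q, q ≤ p ∧ ∃ g : ℕ → Ordinal, ∀ n, q ∈ F n (g n)) ∧
      ((∀ n o p, p ∈ F n o → o < omega1) →
        ∀ p : P, ∃ q, q ≤ p ∧ ∃ g : ℕ → Ordinal,
          ∀ n, g n < omega1 ∧ q ∈ F n (g n))) := by
    classical
  constructor
  · -- Part 1: preservation of stationarity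
    intro S' hS'sub hS'stat N h1 h2 h3 p
    choose ext hext xval hxval using h3
    obtain ⟨e⟩ : Nonempty (List X ≃ X) := Cardinal.eq.mp (Cardinal.mk_list_eq_mk X)
    set es : X → List X := fun y => e.symm y with hes
    set F : List X → X := fun m =>
      (scUndup m).elim (histVal ext xval es p m) (fun l => e l) with hFdef
    obtain ⟨Z, hZc, hZS', hZcl⟩ := hS'stat F
    -- closure of Z under the encoding e
    have hA : ∀ l : List X, (∀ x ∈ l, x ∈ Z) → e l ∈ Z := by
      intro l hl
      have hd : ∀ x ∈ scDup l, x ∈ Z := fun x hx => hl x (mem_scDup hx)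
      have h := hZcl (scDup l) hd
      rw [hFdef] at h
      simp only [scUndup_scDup, Option.elim_some] at h
      exact h
    -- odd-length histories with entries in Z have values in Z
    have hB : ∀ m : List X, (∀ x ∈ m, x ∈ Z) → Odd m.length →
        histVal ext xval es p m ∈ Z := by
      intro m hm hodd
      have h := hZcl m hm
      rw [hFdef] at h
      simp only [scUndup_odd hodd, Option.elim_none] at h
      exact h
    -- enumerate the lists from Z
    obtain ⟨a, ha⟩ := (countable_lists hZc).exists_eq_range ⟨[], by simp⟩
    have haZ : ∀ i, ∀ x ∈ a i, x ∈ Z := by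
      intro i
      have : a i ∈ {l : List X | ∀ x ∈ l, x ∈ Z} := ha ▸ Set.mem_range_self i
      exact this
    -- history sequences
    set hseq : ℕ → List X :=
      fun n => Nat.rec [] (fun k ih => e (a k) :: e (a k) :: ih) n with hhseq
    have hseq_succ : ∀ k, hseq (k + 1) = e (a k) :: e (a k) :: hseq k := fun k => rfl
    set gseq : ℕ → List X := fun i => e (a i) :: hseq i with hgseq
    have hseq_len : ∀ n, (hseq n).length = 2 * n := by
      intro n
      induction n with
      | zero => rfl
      | succ k ih => rw [hseq_succ]; simp only [List.length_cons, ih]; omega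
    have hseq_mem : ∀ n, ∀ x ∈ hseq n, x ∈ Z := by
      intro n
      induction n with
      | zero => intro x hx; simp [hhseq] at hx
      | succ k ih =>
        intro x hx
        rw [hseq_succ] at hx
        simp only [List.mem_cons] at hx
        rcases hx with rfl | rfl | hx
        · exact hA _ (haZ k)
        · exact hA _ (haZ k)
        · exact ih x hx
    have gseq_mem : ∀ i, ∀ x ∈ gseq i, x ∈ Z := by
      intro i x hx
      simp only [hgseq, List.mem_cons] at hx
      rcases hx with rfl | hx
      · exact hA _ (haZ i)
      · exact hseq_mem i x hx
    have gseq_odd : ∀ i, Odd (gseq i).length := by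
      intro i
      simp only [hgseq, List.length_cons, hseq_len]
      exact ⟨i, by ring⟩
    -- the descending sequence of conditions
    set q : ℕ → P := fun i => histCond ext es p (gseq i) with hq
    have hstep : ∀ (y : X) (t : List X),
        histCond ext es p (y :: t) ≤ histCond ext es p t := by
      intro y t
      show ext (es y) (histCond ext es p t) ≤ _
      exact hext _ _
    have hdesc : ∀ i, q (i + 1) ≤ q i := by
      intro i
      show histCond ext es p (gseq (i + 1)) ≤ histCond ext es p (gseq i)
      have e1 : gseq (i + 1) = e (a (i + 1)) :: e (a i) :: gseq i := by
        show _ = _ :: hseq (i+1)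
        rw [hseq_succ]
      rw [e1]
      exact le_trans (hstep _ _) (hstep _ _)
    have hqN : ∀ i, q i ∈ N (a i) (histVal ext xval es p (gseq i)) := by
      intro i
      show histCond ext es p (e (a i) :: hseq i) ∈ _
      have hv : histVal ext xval es p (gseq i)
          = xval (es (e (a i))) (histCond ext es p (hseq i)) := rfl
      have hc : histCond ext es p (e (a i) :: hseq i)
          = ext (es (e (a i))) (histCond ext es p (hseq i)) := rfl
      rw [hv, hc]
      have : es (e (a i)) = a i := e.symm_apply_apply (a i)
      rw [this]
      exact hxval _ _
    have hvZ : ∀ i, histVal ext xval es p (gseq i) ∈ Z :=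
      fun i => hB (gseq i) (gseq_mem i) (gseq_odd i)
    -- apply S-completeness
    obtain ⟨qq, hqq⟩ := hPS Z (hS'sub hZS')
      ((fun l => {r : P | ∃ x, r ∈ N l x}) '' {l : List X | ∀ x ∈ l, x ∈ Z})
      ((countable_lists hZc).image _) q hdesc (by
        intro D hD _
        obtain ⟨l, hl, rfl⟩ := hD
        have : l ∈ Set.range a := ha ▸ hl
        obtain ⟨i, rfl⟩ := this
        exact ⟨i, _, hqN i⟩)
    have hq0p : q 0 ≤ p := by
      show histCond ext es p (gseq 0) ≤ p
      exact hstep _ _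
    refine ⟨qq, le_trans (hqq 0) hq0p, Z, hZS', hZc, ?_⟩
    intro l hl r x hr hrN
    have : l ∈ Set.range a := ha ▸ hl
    obtain ⟨i, rfl⟩ := this
    have hri : r ≤ q i := le_trans hr (hqq i)
    have hrN' : r ∈ N (a i) (histVal ext xval es p (gseq i)) := h1 _ _ _ _ (hqN i) hri
    have hx : x = histVal ext xval es p (gseq i) := h2 _ _ _ _ hrN hrN'
    rw [hx]; exact hvZ i
  · -- Part 2 and 3
    intro F hF1 hF2 hF3
    have partA : ∀ p : P, ∃ q, q ≤ p ∧ ∃ g : ℕ → Ordinal, ∀ n, q ∈ F n (g n) := by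
      intro p
      choose ext2 hle2 o2 ho2 using hF3
      set s : ℕ → P := fun n => Nat.rec (ext2 0 p) (fun k ih => ext2 (k + 1) ih) n with hs
      set g : ℕ → Ordinal :=
        fun n => Nat.rec (o2 0 p) (fun k _ => o2 (k + 1) (s k)) n with hg
      have hsF : ∀ n, s n ∈ F n (g n) := by
        intro n
        cases n with
        | zero => exact ho2 0 p
        | succ k => exact ho2 (k + 1) (s k)
      have hdesc : ∀ n, s (n + 1) ≤ s n := fun n => hle2 (n + 1) (s n)
      obtain ⟨Z, _, hZS, _⟩ := hSstat (fun _ => Classical.arbitrary X)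
      obtain ⟨q, hq⟩ := hPS Z hZS (Set.range (fun n => {r : P | ∃ o, r ∈ F n o}))
        (Set.countable_range _) s hdesc (by
          intro D hD _
          obtain ⟨n, rfl⟩ := hD
          exact ⟨n, g n, hsF n⟩)
      exact ⟨q, le_trans (hq 0) (hle2 0 p), g,
        fun n => hF1 n (g n) (s n) q (hsF n) (hq n)⟩
    refine ⟨partA, fun hbd p => ?_⟩
    obtain ⟨q, hqp, g, hg⟩ := partA p
    exact ⟨q, hqp, g, fun n => ⟨hbd n (g n) q (hg n), hg n⟩⟩
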